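/- In the group Q ⋊ ℤ (q = 2^f, f odd), let C be the subgroup of Q₈ ⋊ ℤ consisting of pairs (g(1,β,γ), n) with g(1,β,γ) ∈ C₄ if n is even and g(1,β,γ) ∉ C₄ if n is odd, where C₄ is a fixed cyclic subgroup of Q₈ of order 4. Then C has index 2 in Q₈ ⋊ ℤ, and the element (g(1,ζ₃,ζ₃),1) together with (g(1,0,0),2) generates C. -/

import Mathlib

/-!
An element `g(1,β,γ)` of `Q₈` has `γ² + γ = β³`, so two elements with the same `β` differ by the
central element `M² = g(1,0,1)`. Running through `β ∈ {0, 1, ζ, ζ+1}`, with representatives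
`1, M, M', MM'`, gives `Q₈ = ⟨M⟩ ∪ ⟨M⟩M'`; and `M' ∉ ⟨M⟩` because `M'` does not commute with `M`.
As `f` is odd, `(M',1)² = (M' · Frob(M'), 2) = (M, 2)`, so the closure contains `⟨M⟩` and `(1,2)`,
hence every element `(w, 2j)` and `(wM', 2j+1)` of `C`. Right multiplication by `(1,1)` flips the
parity condition defining `C` inside `Q₈ ⋊ ℤ`, so the index is 2.
-/

noncomputable def gmat (α β γ : GaloisField 2 2) : Matrix (Fin 3) (Fin 3) (GaloisField 2 2) :=
  !![α, β, γ; 0, α^2, β^2; 0, 0, α]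

/-- The subset `Q₈` of `Q`, consisting of elements with `α = 1`. -/
def Q8set : Set (GL (Fin 3) (GaloisField 2 2)) :=
  {M | ∃ β γ : GaloisField 2 2,
    (M : Matrix (Fin 3) (Fin 3) (GaloisField 2 2)) = gmat 1 β γ ∧
    γ ^ 2 + γ = β ^ 3}

/-- The Frobenius (squaring) automorphism of `GL₃(𝔽₄)`, acting entrywise. -/
noncomputable def frobGL : MulAut (GL (Fin 3) (GaloisField 2 2)) :=
  Units.mapEquiv (RingEquiv.mapMatrix (frobeniusEquiv (GaloisField 2 2) 2)).toMulEquiv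

/-- The action of `ℤ` on `GL₃(𝔽₄)` where `n` acts by the entrywise `q^n`-power map,
`q = 2^f`. -/
noncomputable def φ (f : ℕ) : Multiplicative ℤ →* MulAut (GL (Fin 3) (GaloisField 2 2)) :=
  zpowersHom _ (frobGL ^ f)

local notation "𝔽₄" => GaloisField 2 2

theorem eq_or_eq_add_one_of_sq_add_self_eq {R : Type*} [CommRing R] [NoZeroDivisors R]
    [CharP R 2] {x y : R} (h : x ^ 2 + x = y ^ 2 + y) : x = y ∨ x = y + 1 := by
  have hfac : (x - y) * (x - (y + 1)) = 0 := by
    linear_combination h + (y ^ 2 + y - x * y - x) * CharTwo.two_eq_zero (R := R)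
  rcases mul_eq_zero.1 hfac with h | h
  exacts [.inl (sub_eq_zero.1 h), .inr (sub_eq_zero.1 h)]

namespace GF4

theorem two_eq_zero : (2 : 𝔽₄) = 0 := CharTwo.two_eq_zero

theorem pow_four (x : 𝔽₄) : x ^ 4 = x := by
  have : Fintype 𝔽₄ := Fintype.ofFinite _
  have hcard : Fintype.card 𝔽₄ = 4 := by
    simpa [Nat.card_eq_fintype_card] using GaloisField.card 2 2 (by norm_num)
  simpa [hcard] using FiniteField.pow_card x

variable {ζ : 𝔽₄} (hζ : ζ ^ 2 + ζ + 1 = 0)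
include hζ

theorem eq_zero_or_one_or_zeta (x : 𝔽₄) : x = 0 ∨ x = 1 ∨ x = ζ ∨ x = ζ + 1 := by
  have hidem : (x ^ 2 + x) * (x ^ 2 + x - 1) = 0 := by
    linear_combination pow_four x + x ^ 3 * two_eq_zero
  rcases mul_eq_zero.1 hidem with h | h
  · rcases eq_or_eq_add_one_of_sq_add_self_eq (x := x) (y := 0) (by linear_combination h)
      with h | h
    exacts [.inl h, .inr (.inl (by simpa using h))]
  · rcases eq_or_eq_add_one_of_sq_add_self_eq (x := x) (y := ζ)
      (by linear_combination h - hζ + two_eq_zero)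
      with h | h
    exacts [.inr (.inr (.inl h)), .inr (.inr (.inr h))]

theorem zeta_cube : ζ ^ 3 = 1 := by linear_combination (ζ - 1) * hζ

end GF4

theorem Int.even_and_or_odd_and_not_iff {n : ℤ} {P : Prop} :
    (Even n ∧ P) ∨ (Odd n ∧ ¬P) ↔ (Even n ↔ P) := by
  rw [← Int.not_even_iff_odd]
  tauto

theorem gmat_mul (β γ β' γ' : 𝔽₄) :
    gmat 1 β γ * gmat 1 β' γ' = gmat 1 (β + β') (γ + γ' + β * β' ^ 2) := by
  ext i j
  fin_cases i <;> fin_cases j <;>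
    simp [gmat, Matrix.mul_apply, Fin.sum_univ_three, add_sq, GF4.two_eq_zero, add_comm,
      add_assoc]

theorem gmat_one_inj {β γ β' γ' : 𝔽₄} : gmat 1 β γ = gmat 1 β' γ' ↔ β = β' ∧ γ = γ' :=
  ⟨fun h ↦ ⟨congrFun (congrFun h 0) 1, congrFun (congrFun h 0) 2⟩, by rintro ⟨rfl, rfl⟩; rfl⟩

theorem gmat_one_zero_zero : gmat 1 0 0 = 1 := by
  rw [Matrix.one_fin_three]
  simp [gmat]

theorem one_mem_Q8set : (1 : GL (Fin 3) 𝔽₄) ∈ Q8set :=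
  ⟨0, 0, by rw [Units.val_one, gmat_one_zero_zero], by ring⟩

theorem gmat_map_sq (α β γ : 𝔽₄) :
    (gmat α β γ).map (· ^ 2) = gmat (α ^ 2) (β ^ 2) (γ ^ 2) := by
  ext i j
  fin_cases i <;> fin_cases j <;> simp [gmat, ← pow_mul]

theorem coe_frobGL (u : GL (Fin 3) 𝔽₄) :
    (frobGL u : Matrix (Fin 3) (Fin 3) 𝔽₄) = (u : Matrix (Fin 3) (Fin 3) 𝔽₄).map (· ^ 2) := by
  rfl

theorem frobGL_sq : frobGL ^ 2 = 1 := by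
  refine MulEquiv.ext fun u ↦ Units.ext ?_
  rw [pow_two, MulAut.mul_apply, coe_frobGL, coe_frobGL, Matrix.map_map]
  ext i j
  simp [← pow_mul, GF4.pow_four]

theorem frobGL_pow_of_odd {f : ℕ} (hf : Odd f) : frobGL ^ f = frobGL := by
  obtain ⟨j, rfl⟩ := hf
  rw [pow_succ, pow_mul, frobGL_sq, one_pow, one_mul]

theorem φ_ofAdd_one {f : ℕ} (hf : Odd f) : φ f (Multiplicative.ofAdd 1) = frobGL := by
  rw [φ, zpowersHom_apply, toAdd_ofAdd, zpow_one, frobGL_pow_of_odd hf]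

section Generators

open Subgroup GF4

variable {ζ : 𝔽₄} (hζ : ζ ^ 2 + ζ + 1 = 0) {M M' : GL (Fin 3) 𝔽₄}
  (hM : (M : Matrix (Fin 3) (Fin 3) 𝔽₄) = gmat 1 1 ζ)
  (hM' : (M' : Matrix (Fin 3) (Fin 3) 𝔽₄) = gmat 1 ζ ζ)

include hM

theorem coe_sq_eq_gmat : ((M ^ 2 : GL (Fin 3) 𝔽₄) : Matrix (Fin 3) (Fin 3) 𝔽₄) = gmat 1 0 1 := by
  rw [pow_two, Units.val_mul, hM, gmat_mul]
  exact congrArg₂ (gmat 1) (by linear_combination two_eq_zero)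
    (by linear_combination ζ * two_eq_zero)

theorem eq_or_eq_sq_mul_of_sq_add_self_eq {u v : GL (Fin 3) 𝔽₄} {β γ δ : 𝔽₄}
    (hu : (u : Matrix (Fin 3) (Fin 3) 𝔽₄) = gmat 1 β γ)
    (hv : (v : Matrix (Fin 3) (Fin 3) 𝔽₄) = gmat 1 β δ) (h : γ ^ 2 + γ = δ ^ 2 + δ) :
    u = v ∨ u = M ^ 2 * v := by
  rcases eq_or_eq_add_one_of_sq_add_self_eq h with rfl | rfl
  · exact .inl (Units.ext (hu.trans hv.symm))
  · refine .inr (Units.ext ?_)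
    rw [hu, Units.val_mul, coe_sq_eq_gmat hM, hv, gmat_mul]
    exact congrArg₂ (gmat 1) (zero_add β).symm (by ring)

include hζ hM'

theorem coe_mul_eq_gmat : ((M * M' : GL (Fin 3) 𝔽₄) : Matrix (Fin 3) (Fin 3) 𝔽₄) =
    gmat 1 (ζ + 1) (ζ + 1) := by
  rw [Units.val_mul, hM, hM', gmat_mul]
  exact congrArg₂ (gmat 1) (add_comm 1 ζ) (by linear_combination hζ - two_eq_zero)

theorem mul_ne_mul_swap : M * M' ≠ M' * M := by
  intro h
  have hmat : gmat 1 (ζ + 1) (ζ + 1) = gmat 1 ζ ζ * gmat 1 1 ζ := by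
    rw [← hM, ← hM', ← Units.val_mul, ← h, coe_mul_eq_gmat hζ hM hM']
  rw [gmat_mul, gmat_one_inj] at hmat
  exact one_ne_zero (by linear_combination hmat.2 + ζ * two_eq_zero)

theorem notMem_zpowers : M' ∉ zpowers M := by
  rintro ⟨k, rfl⟩
  exact mul_ne_mul_swap hζ hM hM' ((Commute.refl M).zpow_right k).eq

theorem mul_frobGL_self : M' * frobGL M' = M := by
  refine Units.ext ?_
  rw [Units.val_mul, coe_frobGL, hM', gmat_map_sq, one_pow, gmat_mul, hM]
  exact congrArg₂ (gmat 1) (by linear_combination hζ - two_eq_zero)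
    (by linear_combination ζ ^ 2 * zeta_cube hζ + ζ ^ 2 * two_eq_zero)

theorem mem_zpowers_or_exists_mul_of_mem_Q8set {u : GL (Fin 3) 𝔽₄} (hu : u ∈ Q8set) :
    u ∈ zpowers M ∨ ∃ w ∈ zpowers M, u = w * M' := by
  obtain ⟨β, γ, hu, hrel⟩ := hu
  have hcoset : ∀ {v : GL (Fin 3) 𝔽₄} {δ : 𝔽₄}, (v : Matrix (Fin 3) (Fin 3) 𝔽₄) = gmat 1 β δ →
      γ ^ 2 + γ = δ ^ 2 + δ → (v ∈ zpowers M ∨ ∃ w ∈ zpowers M, v = w * M') →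
      u ∈ zpowers M ∨ ∃ w ∈ zpowers M, u = w * M' := by
    intro v δ hv hδ hvM
    have hsq : M ^ 2 ∈ zpowers M := pow_mem (mem_zpowers M) 2
    rcases eq_or_eq_sq_mul_of_sq_add_self_eq hM hu hv hδ with rfl | rfl
    · exact hvM
    · rcases hvM with hvM | ⟨w, hw, rfl⟩
      · exact .inl (mul_mem hsq hvM)
      · exact .inr ⟨M ^ 2 * w, mul_mem hsq hw, (mul_assoc _ _ _).symm⟩
  rcases eq_zero_or_one_or_zeta hζ β with rfl | rfl | rfl | rfl
  · exact hcoset (v := 1) (by rw [Units.val_one, gmat_one_zero_zero]) (by linear_combination hrel)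
      (.inl (one_mem _))
  · exact hcoset hM (by linear_combination hrel - hζ + two_eq_zero) (.inl (mem_zpowers M))
  · exact hcoset hM' (by linear_combination hrel + zeta_cube hζ - hζ + two_eq_zero)
      (.inr ⟨1, one_mem _, (one_mul M').symm⟩)
  · exact hcoset (coe_mul_eq_gmat hζ hM hM')
      (by linear_combination hrel + (ζ + 1) * hζ - (ζ + 1) * two_eq_zero)
      (.inr ⟨M, mem_zpowers M, rfl⟩)

end Generators

namespace SemidirectProduct

open Multiplicative Subgroup

variable {N : Type*} [Group N] {ψ : Multiplicative ℤ →* MulAut N} {S : Set N}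
  {C : Subgroup (N ⋊[ψ] Multiplicative ℤ)}

theorem relIndex_eq_two_of_mem_iff_even_iff {K : Set N} (hS : 1 ∈ S)
    {H : Subgroup (N ⋊[ψ] Multiplicative ℤ)} (hH : ∀ p, p ∈ H ↔ p.left ∈ S)
    (hC : ∀ p, p ∈ C ↔ p.left ∈ S ∧ (Even (toAdd p.right) ↔ p.left ∈ K)) :
    C.relIndex H = 2 := by
  refine Subgroup.relIndex_eq_two_iff.2 ⟨inr (ofAdd 1), (hH _).2 hS, fun p hp ↦ ?_⟩
  have hleft : (p * inr (ofAdd 1)).left = p.left := by simp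
  have hright : toAdd (p * inr (ofAdd 1)).right = toAdd p.right + 1 := by simp
  rw [hC, hC, hleft, hright, Int.even_add_one, and_iff_right ((hH p).1 hp),
    and_iff_right ((hH p).1 hp)]
  tauto

theorem le_of_mem_iff_even_iff {K : Subgroup N} {m : N}
    (hC : ∀ p, p ∈ C ↔ p.left ∈ S ∧ (Even (toAdd p.right) ↔ p.left ∈ K))
    (hS : ∀ u ∈ S, u ∉ K → ∃ w ∈ K, u = w * m) {G : Subgroup (N ⋊[ψ] Multiplicative ℤ)}
    (hK : K.map inl ≤ G) (hm : (⟨m, ofAdd 1⟩ : N ⋊[ψ] Multiplicative ℤ) ∈ G)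
    (htwo : inr (ofAdd 2) ∈ G) : C ≤ G := by
  intro p hp
  obtain ⟨hpS, hpK⟩ := (hC p).1 hp
  rw [← inl_left_mul_inr_right p]
  obtain ⟨j, hj | hj⟩ := Int.even_or_odd' (toAdd p.right)
  · have hright : p.right = ofAdd 2 ^ j := by
      rw [← ofAdd_toAdd p.right, hj, ← ofAdd_zsmul, smul_eq_mul, mul_comm]
    rw [hright, map_zpow]
    exact mul_mem (hK (mem_map_of_mem inl (hpK.1 ⟨j, by omega⟩))) (zpow_mem htwo j)
  · have hright : p.right = ofAdd 1 * ofAdd 2 ^ j := by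
      rw [← ofAdd_toAdd p.right, hj, ← ofAdd_zsmul, ← ofAdd_add, smul_eq_mul]
      congr 1
      ring
    obtain ⟨w, hw, hpw⟩ := hS _ hpS (fun h ↦ Int.not_even_iff_odd.2 ⟨j, hj⟩ (hpK.2 h))
    rw [hpw, hright, map_mul, map_mul, map_zpow, mul_assoc, ← mul_assoc (inl m),
      ← mk_eq_inl_mul_inr]
    exact mul_mem (hK (mem_map_of_mem inl hw)) (mul_mem hm (zpow_mem htwo j))

end SemidirectProduct

open SemidirectProduct Multiplicative in
theorem mk_mul_self_eq_inl_mul_inr {f : ℕ} (hf : Odd f) {ζ : 𝔽₄} (hζ : ζ ^ 2 + ζ + 1 = 0)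
    {M M' : GL (Fin 3) 𝔽₄} (hM : (M : Matrix (Fin 3) (Fin 3) 𝔽₄) = gmat 1 1 ζ)
    (hM' : (M' : Matrix (Fin 3) (Fin 3) 𝔽₄) = gmat 1 ζ ζ) :
    (⟨M', ofAdd 1⟩ : SemidirectProduct _ (Multiplicative ℤ) (φ f)) * ⟨M', ofAdd 1⟩ =
      inl M * inr (ofAdd 2) := by
  rw [← mk_eq_inl_mul_inr]
  ext
  · rw [mul_left, φ_ofAdd_one hf, mul_frobGL_self hζ hM hM']
  · rfl

/-- In `GL₃(𝔽₄) ⋊ ℤ` (`q = 2^f`, `f` odd), let `C₄` be the cyclic subgroup of order 4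
generated by `M = g(1,1,ζ₃)`, let `H8` be the subgroup `Q₈ ⋊ ℤ`, and let `C` be the subgroup
of pairs `(g(1,β,γ), n)` with `g(1,β,γ) ∈ C₄` iff `n` is even. Then `C` has index 2 in
`Q₈ ⋊ ℤ` and is generated by `(g(1,ζ₃,ζ₃),1)` and `(g(1,0,0),2)`. -/
theorem stmt18 (f : ℕ) (hf : Odd f) (ζ : GaloisField 2 2) (hζ : ζ ^ 2 + ζ + 1 = 0)
    (M M' : GL (Fin 3) (GaloisField 2 2))
    (hM : (M : Matrix (Fin 3) (Fin 3) (GaloisField 2 2)) = gmat 1 1 ζ)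
    (hM' : (M' : Matrix (Fin 3) (Fin 3) (GaloisField 2 2)) = gmat 1 ζ ζ)
    (H8 C : Subgroup (SemidirectProduct _ (Multiplicative ℤ) (φ f)))
    (hH8 : (H8 : Set (SemidirectProduct _ (Multiplicative ℤ) (φ f)))
      = {p | p.left ∈ Q8set})
    (hC : (C : Set (SemidirectProduct _ (Multiplicative ℤ) (φ f)))
      = {p | p.left ∈ Q8set ∧
          ((Even (Multiplicative.toAdd p.right) ∧ p.left ∈ Subgroup.zpowers M) ∨
           (Odd (Multiplicative.toAdd p.right) ∧ p.left ∉ Subgroup.zpowers M))}) :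
    C ≤ H8 ∧ C.relIndex H8 = 2 ∧
      C = Subgroup.closure {(⟨M', Multiplicative.ofAdd 1⟩ :
            SemidirectProduct _ (Multiplicative ℤ) (φ f)),
          ⟨1, Multiplicative.ofAdd 2⟩} := by
  have hH8mem (p : SemidirectProduct _ (Multiplicative ℤ) (φ f)) : p ∈ H8 ↔ p.left ∈ Q8set :=
    Set.ext_iff.1 hH8 p
  have hCmem (p : SemidirectProduct _ (Multiplicative ℤ) (φ f)) : p ∈ C ↔
      p.left ∈ Q8set ∧ (Even (Multiplicative.toAdd p.right) ↔ p.left ∈ Subgroup.zpowers M) :=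
    (Set.ext_iff.1 hC p).trans (and_congr_right fun _ ↦ Int.even_and_or_odd_and_not_iff)
  have hM'Q8 : M' ∈ Q8set :=
    ⟨ζ, ζ, hM', by linear_combination hζ - GF4.zeta_cube hζ - GF4.two_eq_zero⟩
  set x : SemidirectProduct _ (Multiplicative ℤ) (φ f) := ⟨M', Multiplicative.ofAdd 1⟩
  set y : SemidirectProduct _ (Multiplicative ℤ) (φ f) := ⟨1, Multiplicative.ofAdd 2⟩ with hy
  have hyinr : y = SemidirectProduct.inr (Multiplicative.ofAdd 2) := by
    rw [hy, SemidirectProduct.mk_eq_inl_mul_inr, map_one, one_mul]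
  have hxG : x ∈ Subgroup.closure {x, y} := Subgroup.subset_closure (Set.mem_insert x _)
  have hyG : y ∈ Subgroup.closure {x, y} := Subgroup.subset_closure (Set.mem_insert_of_mem x rfl)
  refine ⟨fun p hp ↦ (hH8mem p).2 ((hCmem p).1 hp).1,
    SemidirectProduct.relIndex_eq_two_of_mem_iff_even_iff one_mem_Q8set hH8mem hCmem,
    le_antisymm ?_ ?_⟩
  · have hinl : SemidirectProduct.inl M ∈ Subgroup.closure {x, y} := by
      rw [eq_mul_inv_of_mul_eq (mk_mul_self_eq_inl_mul_inr hf hζ hM hM').symm, ← hyinr]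
      exact mul_mem (mul_mem hxG hxG) (inv_mem hyG)
    refine SemidirectProduct.le_of_mem_iff_even_iff hCmem
      (fun u hu hnot ↦ (mem_zpowers_or_exists_mul_of_mem_Q8set hζ hM hM' hu).resolve_left hnot)
      (by rw [MonoidHom.map_zpowers, Subgroup.zpowers_le]; exact hinl) hxG (hyinr ▸ hyG)
  · refine (Subgroup.closure_le _).2 (Set.insert_subset_iff.2 ⟨(hCmem x).2 ⟨hM'Q8, ?_⟩,
      Set.singleton_subset_iff.2 ((hCmem y).2 ⟨one_mem_Q8set, iff_of_true even_two (one_mem _)⟩)⟩)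
    exact iff_of_false Int.not_even_one (notMem_zpowers hζ hM hM')
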